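/- Let d ≥ 1 and let Q ∈ Matrix ((Fin d)×(Fin d)) ((Fin d)×(Fin d)) ℂ be positive semidefinite with positive semidefinite partial transpose (i.e., Q is PPT). Let F be the swap operator F((i,j),(k,l)) = δ_{i l} δ_{j k}, and let S = (1+F)/2 and R = (1−F)/2. Then Tr(Q F) ≥ 0; equivalently, ⟨Q, R − S⟩ ≤ 0. -/

import Mathlib

open Matrix Kronecker BigOperators ComplexOrder

noncomputable def traceNorm {n : Type*} [Fintype n] [DecidableEq n] (A : Matrix n n ℂ) : ℝ :=
  (((Matrix.posSemidef_conjTranspose_mul_self A).1.eigenvectorUnitary.1 *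
    diagonal (((↑) : ℝ → ℂ) ∘ Real.sqrt ∘ (Matrix.posSemidef_conjTranspose_mul_self A).1.eigenvalues) *
    (star (Matrix.posSemidef_conjTranspose_mul_self A).1.eigenvectorUnitary : Matrix n n ℂ)).trace).re

def IsDensity {n : Type*} [Fintype n] (ρ : Matrix n n ℂ) : Prop :=
  ρ.PosSemidef ∧ ρ.trace = 1

def tensorId {X Y Z : Type*} (Φ : Matrix X X ℂ → Matrix Y Y ℂ)
    (ρ : Matrix (X × Z) (X × Z) ℂ) : Matrix (Y × Z) (Y × Z) ℂ :=
  Matrix.of fun p q => Φ (Matrix.of fun x x' => ρ (x, p.2) (x', q.2)) p.1 q.1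

noncomputable def ChoiMatrix {X Y : Type*} [Fintype X] [DecidableEq X] [Fintype Y]
    (Φ : Matrix X X ℂ → Matrix Y Y ℂ) : Matrix (Y × X) (Y × X) ℂ :=
  ∑ j : X, ∑ k : X, (Φ (Matrix.single j k 1)) ⊗ₖ (Matrix.single j k 1)

def IsChannel {X Y : Type*} [Fintype X] [DecidableEq X] [Fintype Y]
    (Φ : Matrix X X ℂ →ₗ[ℂ] Matrix Y Y ℂ) : Prop :=
  (∀ M, (Φ M).trace = M.trace) ∧ (ChoiMatrix (⇑Φ)).PosSemidef

def SeparableOp {Y Z : Type*} [Fintype Y] [Fintype Z]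
    (P : Matrix (Y × Z) (Y × Z) ℂ) : Prop :=
  ∃ (N : ℕ) (Q : Fin N → Matrix Y Y ℂ) (R : Fin N → Matrix Z Z ℂ),
    (∀ i, (Q i).PosSemidef) ∧ (∀ i, (R i).PosSemidef) ∧ P = ∑ i, Q i ⊗ₖ R i

def partialTranspose {Y Z : Type*} (M : Matrix (Y × Z) (Y × Z) ℂ) :
    Matrix (Y × Z) (Y × Z) ℂ :=
  Matrix.of fun p q => M (p.1, q.2) (q.1, p.2)

def IsPPT {Y Z : Type*} [Fintype Y] [Fintype Z] (M : Matrix (Y × Z) (Y × Z) ℂ) : Prop :=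
  M.PosSemidef ∧ (partialTranspose M).PosSemidef

section SwapOperator

variable {Y : Type*} [Fintype Y] [DecidableEq Y]

def swapMatrix (Y : Type*) [DecidableEq Y] : Matrix (Y × Y) (Y × Y) ℂ :=
  Matrix.of fun p q => if p.1 = q.2 ∧ p.2 = q.1 then 1 else 0

def maxEntangledVec (Y : Type*) [DecidableEq Y] : Y × Y → ℂ :=
  fun p => if p.1 = p.2 then 1 else 0

theorem trace_mul_swapMatrix (M : Matrix (Y × Y) (Y × Y) ℂ) :
    (M * swapMatrix Y).trace = ∑ i, ∑ j, M (i, j) (j, i) := by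
  simp only [Matrix.trace, Matrix.diag, Matrix.mul_apply, swapMatrix, Matrix.of_apply,
    Fintype.sum_prod_type, mul_ite, mul_one, mul_zero]
  refine Finset.sum_congr rfl fun i _ => Finset.sum_congr rfl fun j _ => ?_
  rw [Finset.sum_eq_single j, Finset.sum_eq_single i] <;> simp +contextual [eq_comm]

theorem star_maxEntangledVec_dotProduct_partialTranspose_mulVec (M : Matrix (Y × Y) (Y × Y) ℂ) :
    star (maxEntangledVec Y) ⬝ᵥ (partialTranspose M *ᵥ maxEntangledVec Y) =
      ∑ i, ∑ j, M (i, j) (j, i) := by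
  simp [dotProduct, Matrix.mulVec, maxEntangledVec, partialTranspose, Fintype.sum_prod_type,
    apply_ite (star : ℂ → ℂ)]

theorem trace_mul_swapMatrix_eq_inner_partialTranspose (M : Matrix (Y × Y) (Y × Y) ℂ) :
    (M * swapMatrix Y).trace =
      star (maxEntangledVec Y) ⬝ᵥ (partialTranspose M *ᵥ maxEntangledVec Y) := by
  rw [trace_mul_swapMatrix, star_maxEntangledVec_dotProduct_partialTranspose_mulVec]

theorem trace_mul_swapMatrix_nonneg {M : Matrix (Y × Y) (Y × Y) ℂ}
    (hM : (partialTranspose M).PosSemidef) : 0 ≤ (M * swapMatrix Y).trace := by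
  rw [trace_mul_swapMatrix_eq_inner_partialTranspose]
  exact hM.dotProduct_mulVec_nonneg _

end SwapOperator

theorem ppt_swap_trace_nonneg_general
    (d : ℕ)
    (Q : Matrix (Fin d × Fin d) (Fin d × Fin d) ℂ)
    (hQppt : (partialTranspose Q).PosSemidef)
    (F : Matrix (Fin d × Fin d) (Fin d × Fin d) ℂ)
    (hF : F = Matrix.of fun p q => if p.1 = q.2 ∧ p.2 = q.1 then 1 else 0) :
    0 ≤ ((Q * F).trace).re := by
  subst hF
  exact (Complex.nonneg_iff.mp (trace_mul_swapMatrix_nonneg hQppt)).1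

/-- every PPT operator `Q` satisfies `Tr(Q F) ≥ 0` for the swap operator `F`;
equivalently `⟨Q, R - S⟩ ≤ 0`. -/
theorem ppt_swap_trace_nonneg
    (d : ℕ) (hd : 1 ≤ d)
    (Q : Matrix (Fin d × Fin d) (Fin d × Fin d) ℂ)
    (hQ : Q.PosSemidef) (hQppt : (partialTranspose Q).PosSemidef)
    (F : Matrix (Fin d × Fin d) (Fin d × Fin d) ℂ)
    (hF : F = Matrix.of fun p q => if p.1 = q.2 ∧ p.2 = q.1 then 1 else 0) :
    0 ≤ ((Q * F).trace).re :=
  ppt_swap_trace_nonneg_general d Q hQppt F hF
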